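/- Let f(s) = 3s² - 2s³ and let φ ∈ H¹(𝕋³) satisfy f'(φ(x)) = 0 for a.e. x ∈ 𝕋³. Then either φ = 0 a.e. or φ = 1 a.e. on 𝕋³; in particular the average of f(φ) over 𝕋³ equals 0 or 1. -/

import Mathlib

open MeasureTheory

/-- A fundamental domain of the torus `𝕋³`. -/
def torusCube : Set (EuclideanSpace ℝ (Fin 3)) := {x | ∀ i : Fin 3, x i ∈ Set.Ico (0 : ℝ) 1}

/-- `u` is `ℤ³`-periodic, i.e. descends to the torus `𝕋³`. -/
def TorusPeriodic (u : EuclideanSpace ℝ (Fin 3) → ℝ) : Prop :=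
  ∀ (i : Fin 3) (x : EuclideanSpace ℝ (Fin 3)), u (x + EuclideanSpace.single i (1 : ℝ)) = u x

/-! A continuous `φ` with `φ (1 - φ) = 0` a.e. on the cube vanishes identically there, since the
cube lies in the closure of its interior; so `φ` takes values in the discrete set `{0, 1}` on the
connected cube and is therefore constant on it. -/

theorem IsPreconnected.eqOn_zero_or_eqOn_one {X : Type*} [TopologicalSpace X] {s : Set X}
    (hs : IsPreconnected s) {u : X → ℝ} (hu : ContinuousOn u s)
    (h01 : ∀ x ∈ s, u x * (1 - u x) = 0) : Set.EqOn u 0 s ∨ Set.EqOn u 1 s := by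
  have hmaps : Set.MapsTo u s {0, 1} := fun x hx => by
    rcases mul_eq_zero.1 (h01 x hx) with h | h
    · exact Or.inl h
    · exact Or.inr (sub_eq_zero.1 h).symm
  obtain ⟨c, hc, hcs⟩ := hs.eqOn_const_of_mapsTo ((Set.toFinite _).isDiscrete) hu hmaps
    (Set.insert_nonempty _ _)
  rcases hc with rfl | rfl
  exacts [Or.inl hcs, Or.inr hcs]

theorem torusCube_eq_preimage :
    torusCube = WithLp.ofLp ⁻¹' Set.univ.pi fun _ : Fin 3 => Set.Ico (0 : ℝ) 1 := by
  ext x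
  simp [torusCube, Set.mem_pi]

theorem measurableSet_torusCube : MeasurableSet torusCube := by
  rw [torusCube_eq_preimage]
  exact (MeasurableSet.univ_pi fun _ => measurableSet_Ico).preimage (by fun_prop)

theorem volume_torusCube : volume torusCube = 1 := by
  rw [torusCube_eq_preimage, (PiLp.volume_preserving_ofLp (Fin 3)).measure_preimage
    (MeasurableSet.univ_pi fun _ => measurableSet_Ico).nullMeasurableSet]
  simp [volume_pi_pi, Real.volume_Ico]

theorem convex_torusCube : Convex ℝ torusCube := by
  rw [torusCube_eq_preimage]
  exact (convex_pi fun _ _ => convex_Ico 0 1).linear_preimage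
    (WithLp.linearEquiv 2 ℝ (Fin 3 → ℝ)).toLinearMap

theorem interior_torusCube_nonempty : (interior torusCube).Nonempty := by
  have hopen : IsOpen (WithLp.ofLp ⁻¹' Set.univ.pi fun _ : Fin 3 => Set.Ioo (0 : ℝ) 1) :=
    (isOpen_set_pi Set.finite_univ fun _ _ => isOpen_Ioo).preimage (PiLp.continuous_ofLp 2 _)
  have hsub : (WithLp.ofLp ⁻¹' Set.univ.pi fun _ : Fin 3 => Set.Ioo (0 : ℝ) 1) ⊆ torusCube := by
    rw [torusCube_eq_preimage]
    exact Set.preimage_mono (Set.pi_mono fun _ _ => Set.Ioo_subset_Ico_self)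
  refine ⟨WithLp.toLp 2 fun _ => 1 / 2, hopen.subset_interior_iff.2 hsub ?_⟩
  simp only [Set.mem_preimage, Set.mem_pi, Set.mem_univ, forall_const]
  norm_num

theorem torusCube_subset_closure_interior : torusCube ⊆ closure (interior torusCube) := by
  rw [convex_torusCube.closure_interior_eq_closure_of_nonempty_interior
    interior_torusCube_nonempty]
  exact subset_closure

theorem setIntegral_torusCube_of_eqOn_const {g : EuclideanSpace ℝ (Fin 3) → ℝ} {c : ℝ}
    (h : Set.EqOn g (fun _ => c) torusCube) : ∫ x in torusCube, g x = c := by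
  rw [setIntegral_congr_fun measurableSet_torusCube h, setIntegral_const, measureReal_def,
    volume_torusCube]
  simp

theorem phase_indicator_dichotomy_general
    (φ : EuclideanSpace ℝ (Fin 3) → ℝ)
    (hφ : Differentiable ℝ φ)
    (hcrit : ∀ᵐ x ∂(volume.restrict torusCube), 6 * (φ x - (φ x) ^ 2) = 0) :
    ((∀ᵐ x ∂(volume.restrict torusCube), φ x = 0) ∨
      (∀ᵐ x ∂(volume.restrict torusCube), φ x = 1)) ∧
    ((∫ x in torusCube, (3 * (φ x) ^ 2 - 2 * (φ x) ^ 3)) = 0 ∨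
      (∫ x in torusCube, (3 * (φ x) ^ 2 - 2 * (φ x) ^ 3)) = 1) := by
  have hcont : Continuous φ := hφ.continuous
  have hae : (fun x => φ x * (1 - φ x)) =ᵐ[volume.restrict torusCube] 0 := by
    filter_upwards [hcrit] with x hx
    rw [Pi.zero_apply]
    linear_combination hx / 6
  have hvanish : ∀ x ∈ torusCube, φ x * (1 - φ x) = 0 :=
    Measure.eqOn_of_ae_eq hae (by fun_prop) continuousOn_const torusCube_subset_closure_interior
  rcases convex_torusCube.isPreconnected.eqOn_zero_or_eqOn_one hcont.continuousOn hvanish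
    with h | h
  · refine ⟨Or.inl (ae_restrict_of_forall_mem measurableSet_torusCube h), Or.inl ?_⟩
    exact setIntegral_torusCube_of_eqOn_const fun x hx => by norm_num [h hx]
  · refine ⟨Or.inr (ae_restrict_of_forall_mem measurableSet_torusCube h), Or.inr ?_⟩
    exact setIntegral_torusCube_of_eqOn_const fun x hx => by norm_num [h hx]

/-- Let `f(s) = 3s² - 2s³`, so `f'(s) = 6(s - s²)`. If `φ` is an `H¹` (here: differentiable)
periodic function on `𝕋³` with `f'(φ(x)) = 0` a.e., then `φ = 0` a.e. or `φ = 1` a.e.;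
in particular the mean of `f(φ)` over `𝕋³` is `0` or `1`. -/
theorem phase_indicator_dichotomy
    (φ : EuclideanSpace ℝ (Fin 3) → ℝ) (hper : TorusPeriodic φ)
    (hφ : Differentiable ℝ φ)
    (hcrit : ∀ᵐ x ∂(volume.restrict torusCube), 6 * (φ x - (φ x) ^ 2) = 0) :
    ((∀ᵐ x ∂(volume.restrict torusCube), φ x = 0) ∨
      (∀ᵐ x ∂(volume.restrict torusCube), φ x = 1)) ∧
    ((∫ x in torusCube, (3 * (φ x) ^ 2 - 2 * (φ x) ^ 3)) = 0 ∨
      (∫ x in torusCube, (3 * (φ x) ^ 2 - 2 * (φ x) ^ 3)) = 1) :=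
  phase_indicator_dichotomy_general φ hφ hcrit
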